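/- arXiv:2307.05968 — 5 statements merged into one kernel-verified Lean document; each statement's English description precedes it below -/
import Mathlib

section
/- For the surface z = (x²+y²)^{(1+a)/2} with a ≠ 0, −1, at every point with x²+y² > 0 the Hessian of f(x,y) = (x²+y²)^{(1+a)/2} has eigenvalues whose ratio is a (or 1/a), i.e., H²/K = (a+1)²/(4a) where H = (f_xx+f_yy)/2 and K = f_xx f_yy − f_xy². -/
/-- Partial derivative in the first variable. -/
noncomputable def pdx (f : ℝ → ℝ → ℝ) (x y : ℝ) : ℝ := deriv (fun t => f t y) x

/-- Partial derivative in the second variable. -/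
noncomputable def pdy (f : ℝ → ℝ → ℝ) (x y : ℝ) : ℝ := deriv (fun s => f x s) y

/-!
Write `f = r ^ p` with `r = x² + y²` and `p = (1 + a) / 2`. Away from the origin the Hessian is
`2 p r ^ (p - 2)` times the matrix `[[(2p-1)x² + y², 2(p-1)xy], [2(p-1)xy, x² + (2p-1)y²]]`, whose
trace is `2p r` and whose determinant is `(2p-1) r²`. Hence `H² / K = p² / (2p - 1)`, which is
`(a + 1)² / (4a)`.
-/

open Filter Topology

lemma pdy_pdy_eq_pdx_pdx_of_symm {F : ℝ → ℝ → ℝ} (hF : ∀ x y, F x y = F y x) (x y : ℝ) :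
    pdy (pdy F) x y = pdx (pdx F) y x := by
  simp only [pdy, pdx, hF x]

noncomputable def radialPow (p x y : ℝ) : ℝ := (x ^ 2 + y ^ 2) ^ p

lemma radialPow_symm (p x y : ℝ) : radialPow p x y = radialPow p y x := by
  rw [radialPow, radialPow, add_comm]

lemma radialPow_sub_one {p x y : ℝ} (h : 0 < x ^ 2 + y ^ 2) :
    radialPow (p - 1) x y = (x ^ 2 + y ^ 2) * radialPow (p - 2) x y := by
  rw [radialPow, radialPow, show p - 1 = 1 + (p - 2) by ring, Real.rpow_add h, Real.rpow_one]

lemma hasDerivAt_sq_add_rpow {c p x : ℝ} (h : 0 < x ^ 2 + c) :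
    HasDerivAt (fun t => (t ^ 2 + c) ^ p) (2 * p * x * (x ^ 2 + c) ^ (p - 1)) x := by
  have hsq : HasDerivAt (fun t : ℝ => t ^ 2 + c) (2 * x) x := by
    simpa using (hasDerivAt_pow 2 x).add_const c
  convert hsq.rpow_const (p := p) (Or.inl h.ne') using 1
  ring

lemma pdx_radialPow {p x y : ℝ} (h : 0 < x ^ 2 + y ^ 2) :
    pdx (radialPow p) x y = 2 * p * x * radialPow (p - 1) x y :=
  (hasDerivAt_sq_add_rpow h).deriv

lemma eventually_pos_sq_add {x c : ℝ} (h : 0 < x ^ 2 + c) : ∀ᶠ t in 𝓝 x, 0 < t ^ 2 + c :=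
  (continuous_pow 2 |>.add continuous_const).continuousAt.eventually (lt_mem_nhds h)

lemma pdx_pdx_radialPow {p x y : ℝ} (h : 0 < x ^ 2 + y ^ 2) :
    pdx (pdx (radialPow p)) x y =
      2 * p * radialPow (p - 2) x y * ((2 * p - 1) * x ^ 2 + y ^ 2) := by
  have hloc : (fun t => pdx (radialPow p) t y) =ᶠ[𝓝 x]
      fun t => 2 * p * t * (t ^ 2 + y ^ 2) ^ (p - 1) :=
    (eventually_pos_sq_add h).mono fun t ht => pdx_radialPow ht
  have hderiv : HasDerivAt (fun t => 2 * p * t * (t ^ 2 + y ^ 2) ^ (p - 1))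
      (2 * p * radialPow (p - 1) x y +
        2 * p * x * (2 * (p - 1) * x * radialPow (p - 2) x y)) x := by
    refine (((hasDerivAt_id x).const_mul (2 * p)).mul
      (hasDerivAt_sq_add_rpow (p := p - 1) h)).congr_deriv ?_
    simp only [radialPow, id, show p - 1 - 1 = p - 2 by ring]
    ring
  rw [pdx, hloc.deriv_eq, hderiv.deriv, radialPow_sub_one h]
  ring

lemma pdy_pdx_radialPow {p x y : ℝ} (h : 0 < x ^ 2 + y ^ 2) :
    pdy (pdx (radialPow p)) x y = 2 * p * radialPow (p - 2) x y * (2 * (p - 1) * x * y) := by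
  have h' : 0 < y ^ 2 + x ^ 2 := by rwa [add_comm]
  have hloc : (fun s => pdx (radialPow p) x s) =ᶠ[𝓝 y]
      fun s => 2 * p * x * (s ^ 2 + x ^ 2) ^ (p - 1) :=
    (eventually_pos_sq_add h').mono fun s hs => by
      dsimp only
      rw [pdx_radialPow (by rwa [add_comm]), radialPow, add_comm (x ^ 2)]
  have hderiv : HasDerivAt (fun s => 2 * p * x * (s ^ 2 + x ^ 2) ^ (p - 1))
      (2 * p * x * (2 * (p - 1) * y * radialPow (p - 2) x y)) y := by
    refine ((hasDerivAt_sq_add_rpow (p := p - 1) h').const_mul (2 * p * x)).congr_deriv ?_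
    rw [radialPow_symm, radialPow, show p - 1 - 1 = p - 2 by ring]
  rw [pdy, hloc.deriv_eq, hderiv.deriv]
  ring

lemma pdy_pdy_radialPow {p x y : ℝ} (h : 0 < x ^ 2 + y ^ 2) :
    pdy (pdy (radialPow p)) x y =
      2 * p * radialPow (p - 2) x y * (x ^ 2 + (2 * p - 1) * y ^ 2) := by
  rw [pdy_pdy_eq_pdx_pdx_of_symm (radialPow_symm p), pdx_pdx_radialPow (by rwa [add_comm]),
    radialPow_symm]
  ring

lemma sq_half_trace_div_det_radialPow {p x y : ℝ} (hp : p ≠ 0) (hp' : 2 * p - 1 ≠ 0)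
    (h : 0 < x ^ 2 + y ^ 2) :
    ((pdx (pdx (radialPow p)) x y + pdy (pdy (radialPow p)) x y) / 2) ^ 2 /
        (pdx (pdx (radialPow p)) x y * pdy (pdy (radialPow p)) x y -
          (pdy (pdx (radialPow p)) x y) ^ 2) =
      p ^ 2 / (2 * p - 1) := by
  rw [pdx_pdx_radialPow h, pdy_pdy_radialPow h, pdy_pdx_radialPow h]
  set u := radialPow (p - 2) x y
  have hu : u ≠ 0 := (Real.rpow_pos_of_pos h _).ne'
  have hdet : 2 * p * u * ((2 * p - 1) * x ^ 2 + y ^ 2) *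
        (2 * p * u * (x ^ 2 + (2 * p - 1) * y ^ 2)) - (2 * p * u * (2 * (p - 1) * x * y)) ^ 2 =
      (2 * p * u * (x ^ 2 + y ^ 2)) ^ 2 * (2 * p - 1) := by
    ring
  rw [hdet, div_eq_div_iff (by simp [hp, hu, h.ne', hp']) hp']
  ring

/-- For `f(x,y) = (x²+y²)^((1+a)/2)` with `a ≠ 0, -1`, at every point with
`x²+y² > 0` we have `H²/K = (a+1)²/(4a)`. -/
theorem stmt3 (a : ℝ) (ha : a ≠ 0) (ha' : a ≠ -1)
    (f : ℝ → ℝ → ℝ) (hf : ∀ x y, f x y = (x ^ 2 + y ^ 2) ^ ((1 + a) / 2)) :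
    ∀ x y : ℝ, 0 < x ^ 2 + y ^ 2 →
      ((pdx (pdx f) x y + pdy (pdy f) x y) / 2) ^ 2 /
          (pdx (pdx f) x y * pdy (pdy f) x y - (pdy (pdx f) x y) ^ 2) =
        (a + 1) ^ 2 / (4 * a) := by
  intro x y h
  obtain rfl : f = radialPow ((1 + a) / 2) := funext fun x => funext (hf x)
  have hp : (1 + a) / 2 ≠ 0 := fun hp => ha' (by linarith)
  have hq : 2 * ((1 + a) / 2) - 1 = a := by ring
  rw [sq_half_trace_div_det_radialPow hp (hq.symm ▸ ha) h, hq]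
  field_simp
  ring
end

section
/- Let C be the graph of a smooth function f with constant nonzero isotropic principal curvature κ₁ along an isotropic principal curvature line (x(t), y(t)). Then the isotropic curvature center m(t) = (x − f_x/κ₁, y − f_y/κ₁, f − (f_x² + f_y² − 2)/(2κ₁)) is constant along the curve, i.e., m'(t) = 0. -/
/-- If F is smooth with partials gx, gy, then the composite with a
differentiable curve has derivative gx * x' + gy * y'. -/
lemma comp_hasDerivAt (F gx gy : ℝ → ℝ → ℝ)
    (hF : ContDiff ℝ (⊤ : ℕ∞) (fun p : ℝ × ℝ => F p.1 p.2))
    (hgx : ∀ x y, HasDerivAt (fun t => F t y) (gx x y) x)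
    (hgy : ∀ x y, HasDerivAt (fun s => F x s) (gy x y) y)
    (x y : ℝ → ℝ) (hx : Differentiable ℝ x) (hy : Differentiable ℝ y) (t : ℝ) :
    HasDerivAt (fun t => F (x t) (y t))
      (gx (x t) (y t) * deriv x t + gy (x t) (y t) * deriv y t) t := by
  set F2 : ℝ × ℝ → ℝ := fun p => F p.1 p.2 with hF2
  have hdF : ∀ p : ℝ × ℝ, HasFDerivAt F2 (fderiv ℝ F2 p) p :=
    fun p => (hF.differentiable (by simp) p).hasFDerivAt
  have hc : HasDerivAt (fun t => (x t, y t)) (deriv x t, deriv y t) t :=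
    ((hx t).hasDerivAt).prodMk ((hy t).hasDerivAt)
  have hcomp := (hdF (x t, y t)).comp_hasDerivAt t hc
  have h10 : fderiv ℝ F2 (x t, y t) (1, 0) = gx (x t) (y t) := by
    have h1 : HasDerivAt (fun s : ℝ => (s, y t)) ((1 : ℝ), (0 : ℝ)) (x t) :=
      (hasDerivAt_id (x t)).prodMk (hasDerivAt_const (x t) (y t))
    have := (hdF (x t, y t)).comp_hasDerivAt (x t) h1
    exact (this.unique (hgx (x t) (y t))).symm ▸ rfl
  have h01 : fderiv ℝ F2 (x t, y t) (0, 1) = gy (x t) (y t) := by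
    have h1 : HasDerivAt (fun s : ℝ => (x t, s)) ((0 : ℝ), (1 : ℝ)) (y t) :=
      (hasDerivAt_const (y t) (x t)).prodMk (hasDerivAt_id (y t))
    have := (hdF (x t, y t)).comp_hasDerivAt (y t) h1
    exact (this.unique (hgy (x t) (y t))).symm ▸ rfl
  have hlin : fderiv ℝ F2 (x t, y t) (deriv x t, deriv y t)
      = gx (x t) (y t) * deriv x t + gy (x t) (y t) * deriv y t := by
    have : (deriv x t, deriv y t)
        = deriv x t • ((1:ℝ), (0:ℝ)) + deriv y t • ((0:ℝ), (1:ℝ)) := by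
      simp [Prod.ext_iff]
    rw [this, map_add, map_smul, map_smul, h10, h01]
    simp [smul_eq_mul]; ring
  rw [← hlin]
  exact hcomp

lemma partial_contDiff (F gx : ℝ → ℝ → ℝ)
    (hF : ContDiff ℝ (⊤ : ℕ∞) (fun p : ℝ × ℝ => F p.1 p.2))
    (hgx : ∀ x y, HasDerivAt (fun t => F t y) (gx x y) x) :
    ContDiff ℝ (⊤ : ℕ∞) (fun p : ℝ × ℝ => gx p.1 p.2) := by
  set F2 : ℝ × ℝ → ℝ := fun p => F p.1 p.2 with hF2
  have key : ∀ p : ℝ × ℝ, gx p.1 p.2 = fderiv ℝ F2 p (1, 0) := by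
    intro p
    have hdF : HasFDerivAt F2 (fderiv ℝ F2 p) p :=
      (hF.differentiable (by simp) p).hasFDerivAt
    have h1 : HasDerivAt (fun s : ℝ => (s, p.2)) ((1 : ℝ), (0 : ℝ)) p.1 :=
      (hasDerivAt_id p.1).prodMk (hasDerivAt_const p.1 p.2)
    have := hdF.comp_hasDerivAt p.1 h1
    exact ((hgx p.1 p.2).unique this)
  have : ContDiff ℝ (⊤ : ℕ∞) (fun p : ℝ × ℝ => fderiv ℝ F2 p (1, 0)) :=
    (hF.fderiv_right (by simp)).clm_apply contDiff_const
  have heq : (fun p : ℝ × ℝ => gx p.1 p.2) = fun p => fderiv ℝ F2 p (1, 0) := funext key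
  rw [heq]; exact this

/-- Along an isotropic principal curvature line with constant nonzero isotropic
principal curvature `κ₁`, the isotropic curvature center
`m(t) = (x − f_x/κ₁, y − f_y/κ₁, f − (f_x²+f_y²−2)/(2κ₁))` is constant. -/
theorem stmt7 (f fx fy fxx fxy fyy : ℝ → ℝ → ℝ)
    (hsmooth : ContDiff ℝ (⊤ : ℕ∞) (fun p : ℝ × ℝ => f p.1 p.2))
    (hfx : ∀ x y, HasDerivAt (fun t => f t y) (fx x y) x)
    (hfy : ∀ x y, HasDerivAt (fun s => f x s) (fy x y) y)
    (hfxx : ∀ x y, HasDerivAt (fun t => fx t y) (fxx x y) x)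
    (hfxy : ∀ x y, HasDerivAt (fun s => fx x s) (fxy x y) y)
    (hfyx : ∀ x y, HasDerivAt (fun t => fy t y) (fxy x y) x)
    (hfyy : ∀ x y, HasDerivAt (fun s => fy x s) (fyy x y) y)
    (x y : ℝ → ℝ) (hx : Differentiable ℝ x) (hy : Differentiable ℝ y)
    (κ₁ : ℝ) (hκ : κ₁ ≠ 0)
    (hpcl1 : ∀ t, fxx (x t) (y t) * deriv x t + fxy (x t) (y t) * deriv y t
      = κ₁ * deriv x t)
    (hpcl2 : ∀ t, fxy (x t) (y t) * deriv x t + fyy (x t) (y t) * deriv y t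
      = κ₁ * deriv y t) :
    ∀ t : ℝ,
      deriv (fun t => x t - fx (x t) (y t) / κ₁) t = 0 ∧
      deriv (fun t => y t - fy (x t) (y t) / κ₁) t = 0 ∧
      deriv (fun t => f (x t) (y t) -
        (fx (x t) (y t) ^ 2 + fy (x t) (y t) ^ 2 - 2) / (2 * κ₁)) t = 0 := by
  intro t
  have hfxs : ContDiff ℝ (⊤ : ℕ∞) (fun p : ℝ × ℝ => fx p.1 p.2) :=
    partial_contDiff f fx hsmooth hfx
  have hfys : ContDiff ℝ (⊤ : ℕ∞) (fun p : ℝ × ℝ => fy p.1 p.2) := by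
    have hF : ContDiff ℝ (⊤ : ℕ∞) (fun p : ℝ × ℝ => f p.2 p.1) := by
      exact hsmooth.comp (contDiff_snd.prodMk contDiff_fst)
    have := partial_contDiff (fun a b => f b a) (fun a b => fy b a) hF
      (fun a b => hfy b a)
    exact this.comp (contDiff_snd.prodMk contDiff_fst)
  have hX : HasDerivAt x (deriv x t) t := (hx t).hasDerivAt
  have hY : HasDerivAt y (deriv y t) t := (hy t).hasDerivAt
  have hFx : HasDerivAt (fun t => fx (x t) (y t)) (κ₁ * deriv x t) t := by
    have := comp_hasDerivAt fx fxx fxy hfxs hfxx hfxy x y hx hy t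
    rwa [hpcl1 t] at this
  have hFy : HasDerivAt (fun t => fy (x t) (y t)) (κ₁ * deriv y t) t := by
    have := comp_hasDerivAt fy fxy fyy hfys hfyx hfyy x y hx hy t
    rwa [hpcl2 t] at this
  have hFf : HasDerivAt (fun t => f (x t) (y t))
      (fx (x t) (y t) * deriv x t + fy (x t) (y t) * deriv y t) t :=
    comp_hasDerivAt f fx fy hsmooth hfx hfy x y hx hy t
  refine ⟨?_, ?_, ?_⟩
  · rw [(show HasDerivAt (fun t => x t - fx (x t) (y t) / κ₁) _ t from hX.sub (hFx.div_const κ₁)).deriv]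
    field_simp
    ring
  · rw [(show HasDerivAt (fun t => y t - fy (x t) (y t) / κ₁) _ t from hY.sub (hFy.div_const κ₁)).deriv]
    field_simp
    ring
  · have h3 : HasDerivAt (fun t => (fx (x t) (y t) ^ 2 + fy (x t) (y t) ^ 2 - 2)
        / (2 * κ₁))
        ((2 * fx (x t) (y t) ^ 1 * (κ₁ * deriv x t)
          + 2 * fy (x t) (y t) ^ 1 * (κ₁ * deriv y t)) / (2 * κ₁)) t := by
      exact (((hFx.pow 2).add (hFy.pow 2)).sub_const 2).div_const (2 * κ₁)
    rw [(show HasDerivAt (fun t => f (x t) (y t) -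
        (fx (x t) (y t) ^ 2 + fy (x t) (y t) ^ 2 - 2) / (2 * κ₁)) _ t from hFf.sub h3).deriv]
    field_simp
    ring
end

section
/- Assume two parabolae D₁: z = A(x+B)² and D₂: z = A(x−B)² in the xz-plane with A ≠ 0 and B ≠ 0. Let p₁ = (x₁, A(x₁+B)²) ∈ D₁ and p₂ = (x₂, A(x₂−B)²) ∈ D₂ with x₁ ≠ x₂. Let α₁, α₂ be the differences of slopes between the line p₁p₂ and the tangents of D₁ at p₁ and D₂ at p₂ respectively. Then |α₁ + α₂| = 4|AB|·|x₁+x₂|/|x₁−x₂|; consequently the distance from the midpoint of p₁p₂ to the z-axis equals |α₁+α₂|·d/|8AB| where d = |x₁−x₂|. -/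
/-- For two symmetric parabolae `z = A(x±B)²` and points `p₁, p₂` on them, the
sum of the replacing angles between the chord and the parabolae satisfies
`|α₁+α₂| = 4|AB|·|x₁+x₂|/|x₁−x₂|`, so the isotropic distance from the midpoint
of the chord to the symmetry axis equals `|α₁+α₂|·d/|8AB|`. -/
theorem stmt9 (A B x₁ x₂ : ℝ) (hA : A ≠ 0) (hB : B ≠ 0) (hx : x₁ ≠ x₂)
    (slope α₁ α₂ d : ℝ)
    (hslope : slope = (A * (x₂ - B) ^ 2 - A * (x₁ + B) ^ 2) / (x₂ - x₁))
    (hα₁ : α₁ = slope - 2 * A * (x₁ + B))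
    (hα₂ : α₂ = slope - 2 * A * (x₂ - B))
    (hd : d = |x₁ - x₂|) :
    |α₁ + α₂| = 4 * |A * B| * |x₁ + x₂| / |x₁ - x₂| ∧
    |(x₁ + x₂) / 2| = |α₁ + α₂| * d / |8 * A * B| := by
  have hsub : x₂ - x₁ ≠ 0 := sub_ne_zero.mpr (Ne.symm hx)
  have hsub' : x₁ - x₂ ≠ 0 := sub_ne_zero.mpr hx
  have key : α₁ + α₂ = -(4 * (A * B) * (x₁ + x₂)) / (x₂ - x₁) := by
    subst hα₁ hα₂ hslope
    field_simp
    ring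
  have h1 : |α₁ + α₂| = 4 * |A * B| * |x₁ + x₂| / |x₁ - x₂| := by
    rw [key, abs_div, abs_neg, abs_sub_comm]
    rw [show 4 * (A * B) * (x₁ + x₂) = (4 * (A * B)) * (x₁ + x₂) by ring,
      abs_mul, abs_mul]
    simp [abs_of_nonneg, mul_comm, mul_assoc, mul_left_comm]
  refine ⟨h1, ?_⟩
  rw [h1, hd, abs_div, show |(2:ℝ)| = 2 by norm_num]
  have habs : |x₁ - x₂| ≠ 0 := abs_ne_zero.mpr hsub'
  have hab : |A * B| ≠ 0 := abs_ne_zero.mpr (mul_ne_zero hA hB)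
  rw [show |8 * A * B| = 8 * |A * B| by
    rw [show (8:ℝ) * A * B = 8 * (A * B) by ring, abs_mul]; norm_num]
  field_simp
  ring
end

section
/- Let f, g be smooth functions with f''(u) g''(v) ≠ 0 everywhere, k ∈ ℝ, a ≠ 0, and suppose (k² + 1 + f''(u)/g''(v))² = ((a+1)²/a)·(f''(u)/g''(v)) holds for all (u,v) in a product of intervals. Then f'' and g'' are both constant. -/
/-- A continuous function whose value at each point of a preconnected set
satisfies a fixed monic quadratic equation is constant on that set. -/
lemma quad_const {S : Set ℝ} (hS : IsPreconnected S) {h : ℝ → ℝ}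
    (hc : ContinuousOn h S) {b d : ℝ}
    (hq : ∀ x ∈ S, h x ^ 2 + b * h x + d = 0) :
    ∀ x ∈ S, ∀ y ∈ S, h x = h y := by
  intro x hx y hy
  by_contra hxy
  -- from the quadratic, any two distinct values sum to -b
  have key : ∀ z ∈ S, ∀ w ∈ S, h z ≠ h w → h z + h w = -b := by
    intro z hz w hw hzw
    have h1 := hq z hz
    have h2 := hq w hw
    have : (h z - h w) * (h z + h w + b) = 0 := by nlinarith
    rcases mul_eq_zero.mp this with h' | h'
    · exact absurd (by linarith) hzw
    · linarith
  have hsum : h x + h y = -b := key x hx y hy hxy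
  -- WLOG h x < h y
  rcases lt_or_gt_of_ne hxy with hlt | hgt
  · have hmid : -b / 2 ∈ Set.Icc (h x) (h y) := by
      constructor <;> [linarith; linarith]
    obtain ⟨z, hz, hzval⟩ := hS.intermediate_value hx hy hc hmid
    rcases eq_or_ne (h z) (h x) with h' | h'
    · rw [hzval] at h'; linarith
    · have := key z hz x hx h'
      have : h z = h y := by linarith
      rw [hzval] at this; linarith
  · have hmid : -b / 2 ∈ Set.Icc (h y) (h x) := by
      constructor <;> [linarith; linarith]
    obtain ⟨z, hz, hzval⟩ := hS.intermediate_value hy hx hc hmid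
    rcases eq_or_ne (h z) (h y) with h' | h'
    · rw [hzval] at h'; linarith
    · have := key z hz y hy h'
      have : h z = h x := by linarith
      rw [hzval] at this; linarith

/-- If `(k² + 1 + f''/g'')² = ((a+1)²/a)·(f''/g'')` holds on a product of
intervals with `f''g'' ≠ 0` everywhere, then `f''` and `g''` are both
constant. -/
theorem stmt16 (a k : ℝ) (ha : a ≠ 0)
    (i₁ i₂ j₁ j₂ : ℝ) (hi : i₁ < i₂) (hj : j₁ < j₂)
    (f g : ℝ → ℝ)
    (hf : ContDiff ℝ (⊤ : ℕ∞) f) (hg : ContDiff ℝ (⊤ : ℕ∞) g)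
    (hne : ∀ u ∈ Set.Ioo i₁ i₂, ∀ v ∈ Set.Ioo j₁ j₂,
      deriv (deriv f) u * deriv (deriv g) v ≠ 0)
    (heq : ∀ u ∈ Set.Ioo i₁ i₂, ∀ v ∈ Set.Ioo j₁ j₂,
      (k ^ 2 + 1 + deriv (deriv f) u / deriv (deriv g) v) ^ 2 =
        (a + 1) ^ 2 / a * (deriv (deriv f) u / deriv (deriv g) v)) :
    (∃ cf : ℝ, ∀ u ∈ Set.Ioo i₁ i₂, deriv (deriv f) u = cf) ∧
    (∃ cg : ℝ, ∀ v ∈ Set.Ioo j₁ j₂, deriv (deriv g) v = cg) := by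
  set F := deriv (deriv f) with hF
  set G := deriv (deriv g) with hG
  have hFc : Continuous F := by
    have h1 : ContDiff ℝ (⊤ : ℕ∞) (deriv f) := (contDiff_infty_iff_deriv.mp (hf.of_le (by simp))).2
    exact h1.continuous_deriv (by exact_mod_cast le_top)
  have hGc : Continuous G := by
    have h1 : ContDiff ℝ (⊤ : ℕ∞) (deriv g) := (contDiff_infty_iff_deriv.mp (hg.of_le (by simp))).2
    exact h1.continuous_deriv (by exact_mod_cast le_top)
  set u₀ := (i₁ + i₂) / 2 with hu₀
  set v₀ := (j₁ + j₂) / 2 with hv₀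
  have hu₀m : u₀ ∈ Set.Ioo i₁ i₂ := ⟨by simp [hu₀]; linarith, by simp [hu₀]; linarith⟩
  have hv₀m : v₀ ∈ Set.Ioo j₁ j₂ := ⟨by simp [hv₀]; linarith, by simp [hv₀]; linarith⟩
  have hFne : ∀ u ∈ Set.Ioo i₁ i₂, F u ≠ 0 := fun u hu =>
    left_ne_zero_of_mul (hne u hu v₀ hv₀m)
  have hGne : ∀ v ∈ Set.Ioo j₁ j₂, G v ≠ 0 := fun v hv =>
    right_ne_zero_of_mul (hne u₀ hu₀m v hv)
  set c := (a + 1) ^ 2 / a with hcdef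
  have quad : ∀ u ∈ Set.Ioo i₁ i₂, ∀ v ∈ Set.Ioo j₁ j₂,
      (F u / G v) ^ 2 + (2 * (k ^ 2 + 1) - c) * (F u / G v) + (k ^ 2 + 1) ^ 2 = 0 := by
    intro u hu v hv
    have := heq u hu v hv
    nlinarith [this]
  -- f'' constant
  have hconn₁ : IsPreconnected (Set.Ioo i₁ i₂) := isPreconnected_Ioo
  have hconn₂ : IsPreconnected (Set.Ioo j₁ j₂) := isPreconnected_Ioo
  have hFconst : ∀ u ∈ Set.Ioo i₁ i₂, F u = F u₀ := by
    have hcont : ContinuousOn (fun u => F u / G v₀) (Set.Ioo i₁ i₂) :=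
      (hFc.div_const _).continuousOn
    have := quad_const hconn₁ hcont (b := 2 * (k ^ 2 + 1) - c) (d := (k ^ 2 + 1) ^ 2)
      (fun u hu => quad u hu v₀ hv₀m)
    intro u hu
    have h' := this u hu u₀ hu₀m
    have hG0 := hGne v₀ hv₀m
    field_simp at h'
    exact h'
  have hGconst : ∀ v ∈ Set.Ioo j₁ j₂, G v = G v₀ := by
    have hcont : ContinuousOn (fun v => F u₀ / G v) (Set.Ioo j₁ j₂) :=
      continuousOn_const.div hGc.continuousOn hGne
    have := quad_const hconn₂ hcont (b := 2 * (k ^ 2 + 1) - c) (d := (k ^ 2 + 1) ^ 2)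
      (fun v hv => quad u₀ hu₀m v hv)
    intro v hv
    have h' := this v hv v₀ hv₀m
    have hF0 := hFne u₀ hu₀m
    have hGv := hGne v hv
    have hGv₀ := hGne v₀ hv₀m
    field_simp at h'
    exact h'.symm
  exact ⟨⟨F u₀, hFconst⟩, ⟨G v₀, hGconst⟩⟩
end

section
/- Let f, g be smooth with f'(u) f''(u) g''(v) ≠ 0 and suppose ((1+g'(v)²)·f''(u)/f'(u) + g''(v))² = ((a+1)²/a)·(f''(u)/f'(u))·g''(v) for all (u,v). Then f''/f' is constant, so f(u) = p e^{λu} + q for some constants p ≠ 0, λ ≠ 0, q. -/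
/-- A function with zero derivative on an open interval is constant there. -/
lemma const_of_deriv_zero_Ioo {F : ℝ → ℝ} {a b : ℝ}
    (h : ∀ x ∈ Set.Ioo a b, HasDerivAt F 0 x) {x y : ℝ}
    (hx : x ∈ Set.Ioo a b) (hy : y ∈ Set.Ioo a b) : F x = F y := by
  apply (convex_Ioo a b).is_const_of_fderivWithin_eq_zero
    (fun z hz => (h z hz).differentiableAt.differentiableWithinAt) ?_ hx hy
  intro z hz
  rw [fderivWithin_eq_fderiv ((isOpen_Ioo).uniqueDiffOn z hz)
    (h z hz).differentiableAt, (h z hz).hasFDerivAt.fderiv]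
  ext t
  simp

/-- If `((1+g'²)f''/f' + g'')² = ((a+1)²/a)·(f''/f')·g''` holds on a product of
intervals with `f'f''g'' ≠ 0` everywhere, then `f''/f'` is constant, so
`f(u) = p e^(λu) + q`. -/
theorem stmt17 (a : ℝ) (ha : a ≠ 0)
    (i₁ i₂ j₁ j₂ : ℝ) (hi : i₁ < i₂) (hj : j₁ < j₂)
    (f g : ℝ → ℝ)
    (hf : ContDiff ℝ (⊤ : ℕ∞) f) (hg : ContDiff ℝ (⊤ : ℕ∞) g)
    (hne : ∀ u ∈ Set.Ioo i₁ i₂, ∀ v ∈ Set.Ioo j₁ j₂,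
      deriv f u * deriv (deriv f) u * deriv (deriv g) v ≠ 0)
    (heq : ∀ u ∈ Set.Ioo i₁ i₂, ∀ v ∈ Set.Ioo j₁ j₂,
      ((1 + deriv g v ^ 2) * (deriv (deriv f) u / deriv f u) +
          deriv (deriv g) v) ^ 2 =
        (a + 1) ^ 2 / a * (deriv (deriv f) u / deriv f u) * deriv (deriv g) v) :
    (∃ lam : ℝ, lam ≠ 0 ∧ ∀ u ∈ Set.Ioo i₁ i₂,
      deriv (deriv f) u / deriv f u = lam) ∧
    ∃ p q lam : ℝ, p ≠ 0 ∧ lam ≠ 0 ∧ ∀ u ∈ Set.Ioo i₁ i₂,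
      f u = p * Real.exp (lam * u) + q := by
  -- basic smoothness facts
  have hfi : ContDiff ℝ ((⊤ : ℕ∞) : WithTop ℕ∞) f := hf.of_le (by simp)
  have hf1 : ContDiff ℝ ((⊤ : ℕ∞) : WithTop ℕ∞) (deriv f) := (contDiff_infty_iff_deriv.mp hfi).2
  have hf2 : Continuous (deriv (deriv f)) := (contDiff_infty_iff_deriv.mp hf1).2.continuous
  have hf1c : Continuous (deriv f) := hf1.continuous
  -- fixed points
  set u₀ : ℝ := (i₁ + i₂) / 2 with hu₀def
  set v₀ : ℝ := (j₁ + j₂) / 2 with hv₀def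
  have hu₀ : u₀ ∈ Set.Ioo i₁ i₂ := by constructor <;> (simp only [hu₀def]; linarith)
  have hv₀ : v₀ ∈ Set.Ioo j₁ j₂ := by constructor <;> (simp only [hv₀def]; linarith)
  have hf'ne : ∀ u ∈ Set.Ioo i₁ i₂, deriv f u ≠ 0 := by
    intro u hu
    have := hne u hu v₀ hv₀
    intro h0; apply this; rw [h0]; ring
  have hf''ne : ∀ u ∈ Set.Ioo i₁ i₂, deriv (deriv f) u ≠ 0 := by
    intro u hu
    have := hne u hu v₀ hv₀
    intro h0; apply this; rw [h0]; ring
  set h : ℝ → ℝ := fun u => deriv (deriv f) u / deriv f u with hdef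
  have hcont : ContinuousOn h (Set.Ioo i₁ i₂) :=
    ContinuousOn.div hf2.continuousOn hf1c.continuousOn hf'ne
  set c : ℝ := 1 + deriv g v₀ ^ 2 with hcdef
  set d : ℝ := deriv (deriv g) v₀ with hddef
  set K : ℝ := (a + 1) ^ 2 / a with hKdef
  have hc : c ≠ 0 := by positivity
  -- the quadratic relation for h u
  have hq : ∀ u ∈ Set.Ioo i₁ i₂, (c * h u + d) ^ 2 = K * h u * d := by
    intro u hu
    exact heq u hu v₀ hv₀
  -- any two roots of the quadratic are equal or sum to a fixed value
  have hroots : ∀ x y : ℝ, (c * x + d) ^ 2 = K * x * d → (c * y + d) ^ 2 = K * y * d →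
      x ≠ y → c ^ 2 * (x + y) = K * d - 2 * c * d := by
    intro x y hx hy hxy
    have key : (x - y) * (c ^ 2 * (x + y) + 2 * c * d - K * d) =
        ((c * x + d) ^ 2 - K * x * d) - ((c * y + d) ^ 2 - K * y * d) := by ring
    rw [hx, hy] at key
    simp only [sub_self, sub_zero] at key
    have := mul_eq_zero.mp (by linarith [key] : (x - y) * (c ^ 2 * (x + y) + 2 * c * d - K * d) = 0)
    rcases this with h1 | h1
    · exact absurd (by linarith : x = y) hxy
    · linarith
  set lam : ℝ := h u₀ with hlamdef
  -- h is constant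
  have hconst : ∀ u ∈ Set.Ioo i₁ i₂, h u = lam := by
    intro u hu
    by_contra hne'
    set t : ℝ := (h u + lam) / 2 with htdef
    have hsum : c ^ 2 * (h u + lam) = K * d - 2 * c * d :=
      hroots _ _ (hq u hu) (hq u₀ hu₀) hne'
    -- t is in the image of h by IVT
    have hsub : Set.uIcc u u₀ ⊆ Set.Ioo i₁ i₂ :=
      (Set.ordConnected_Ioo).uIcc_subset hu hu₀
    have ht : t ∈ Set.uIcc (h u) (h u₀) := by
      rcases le_total (h u) lam with h'|h'
      · rw [Set.mem_uIcc]; left; constructor <;> (simp only [htdef, ← hlamdef]; linarith)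
      · rw [Set.mem_uIcc]; right; constructor <;> (simp only [htdef, ← hlamdef]; linarith)
    obtain ⟨u', hu', hu't⟩ := intermediate_value_uIcc (hcont.mono hsub) ht
    have hu'mem : u' ∈ Set.Ioo i₁ i₂ := hsub hu'
    -- t is a root
    have htroot : (c * t + d) ^ 2 = K * t * d := by rw [← hu't]; exact hq u' hu'mem
    have htne : t ≠ lam := by
      intro h0
      apply hne'
      have : (h u + lam) / 2 = lam := h0
      linarith
    have := hroots t lam htroot (hq u₀ hu₀) htne
    -- t + lam = h u + lam  ⇒ t = h u, but t = (h u + lam)/2 ⇒ h u = lam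
    have hc2 : c ^ 2 ≠ 0 := pow_ne_zero _ hc
    have h1 : t + lam = h u + lam := mul_left_cancel₀ hc2 (by rw [this, hsum])
    apply hne'
    have : (h u + lam) / 2 = t := rfl
    linarith
  have hlamne : lam ≠ 0 := by
    have := hconst u₀ hu₀
    exact div_ne_zero (hf''ne u₀ hu₀) (hf'ne u₀ hu₀)
  refine ⟨⟨lam, hlamne, hconst⟩, ?_⟩
  -- the ODE part
  have hODE : ∀ u ∈ Set.Ioo i₁ i₂, deriv (deriv f) u = lam * deriv f u := by
    intro u hu
    have h1 := hconst u hu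
    exact (div_eq_iff (hf'ne u hu)).mp h1
  have hone : (1 : WithTop ℕ∞) ≤ ((⊤ : ℕ∞) : WithTop ℕ∞) := by exact_mod_cast le_top
  have hd1 : ∀ u : ℝ, HasDerivAt f (deriv f u) u :=
    fun u => (hfi.differentiable (lt_of_lt_of_le zero_lt_one hone).ne' u).hasDerivAt
  have hd2 : ∀ u : ℝ, HasDerivAt (deriv f) (deriv (deriv f) u) u :=
    fun u => (hf1.differentiable (lt_of_lt_of_le zero_lt_one hone).ne' u).hasDerivAt
  -- first: deriv f u * exp (-lam * u) is constant
  have hexp : ∀ (μ : ℝ) (u : ℝ), HasDerivAt (fun x => Real.exp (μ * x)) (Real.exp (μ * u) * μ) u :=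
    fun μ u => by simpa using ((hasDerivAt_id u).const_mul μ).exp
  have hF : ∀ u ∈ Set.Ioo i₁ i₂,
      HasDerivAt (fun x => deriv f x * Real.exp (-lam * x)) 0 u := by
    intro u hu
    have := (hd2 u).mul (hexp (-lam) u)
    refine this.congr_deriv ?_
    rw [hODE u hu]; ring
  set p : ℝ := deriv f u₀ * Real.exp (-lam * u₀) / lam with hpdef
  set q : ℝ := f u₀ - deriv f u₀ / lam with hqdef
  have hpne : p ≠ 0 := by
    apply div_ne_zero (mul_ne_zero (hf'ne u₀ hu₀) (Real.exp_ne_zero _)) hlamne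
  have hFeq : ∀ u ∈ Set.Ioo i₁ i₂, deriv f u = p * lam * Real.exp (lam * u) := by
    intro u hu
    have := const_of_deriv_zero_Ioo hF hu hu₀
    have hplam : p * lam = deriv f u₀ * Real.exp (-lam * u₀) := by
      rw [hpdef, div_mul_cancel₀ _ hlamne]
    rw [hplam, ← this]
    have he : Real.exp (-lam * u) * Real.exp (lam * u) = 1 := by
      rw [← Real.exp_add, neg_mul, neg_add_cancel, Real.exp_zero]
    rw [mul_assoc, he, mul_one]
  -- second: f u - p * exp (lam * u) is constant
  have hG : ∀ u ∈ Set.Ioo i₁ i₂,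
      HasDerivAt (fun x => f x - p * Real.exp (lam * x)) 0 u := by
    intro u hu
    have := (hd1 u).sub ((hexp lam u).const_mul p)
    refine this.congr_deriv ?_
    rw [hFeq u hu]; ring
  refine ⟨p, q, lam, hpne, hlamne, fun u hu => ?_⟩
  have := const_of_deriv_zero_Ioo hG hu hu₀
  have hq0 : f u₀ - p * Real.exp (lam * u₀) = q := by
    have he : Real.exp (-lam * u₀) * Real.exp (lam * u₀) = 1 := by
      rw [← Real.exp_add, neg_mul, neg_add_cancel, Real.exp_zero]
    have hpe : p * Real.exp (lam * u₀) = deriv f u₀ / lam := by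
      rw [hpdef, div_mul_eq_mul_div, mul_assoc, he, mul_one]
    rw [hqdef, hpe]
  have : f u - p * Real.exp (lam * u) = q := by rw [this, hq0]
  linarith
end
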